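/- Let A, B, K, Q, R, P, N, and the cost J(z; v) be as follows: A is a real n×n matrix, B a real n×m matrix, K a real m×n matrix; Q, R, P are real symmetric positive semidefinite matrices satisfying P = (A + BK)ᵀ P (A + BK) + Q + Kᵀ R K; N ≥ 1; and J(z; v) = Σ_{j=0}^{N−1} [ (x̄(j) − x_a)ᵀ Q (x̄(j) − x_a) + (v(j) − u_a)ᵀ R (v(j) − u_a) ] + (x̄(N) − x_a)ᵀ P (x̄(N) − x_a) along x̄(0) = z, x̄(j+1) = A x̄(j) + B v(j). Let Z ⊆ ℝ^n × ℝ^m and let Ω ⊆ ℝ^n × ℝ^n × ℝ^m satisfy: for every (x, x_a, u_a) ∈ Ω, (x, K(x − x_a) + u_a) ∈ Z, A x_a + B u_a = x_a, and (A x + B(K(x − x_a) + u_a), x_a, u_a) ∈ Ω. Let S ≥ 0, let V_of : ℝ^n × ℝ^m → [0, ∞) and let V_av assign to each decision tuple (z, v, x_a, u_a) a value in [0, S]. Call (v, x_a, u_a) feasible for z if the states x̄(j) from z under v satisfy (x̄(j), v(j)) ∈ Z for j ∈ {0, …, N−1} and (x̄(N), x_a, u_a) ∈ Ω, and define the total cost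 V_N(z; v, x_a, u_a) = J(z; v) (with artificial pair (x_a, u_a)) + V_of(x_a, u_a) + V_av(z, v, x_a, u_a), and the value function V*(z) as the infimum of V_N(z; v, x_a, u_a) over feasible tuples. Suppose for a state x the infimum is attained at a feasible tuple (u°, x_a°, u_a°), and let x⁺ = A x + B u°(0). Then V*(x⁺) ≤ V*(x) − (x − x_a°)ᵀ Q (x − x_a°) − (u°(0) − u_a°)ᵀ R (u°(0) − u_a°) + S. -/

import Mathlib

/-!
Shift the optimal input sequence by one step and append the terminal feedback
`K (x̄(N) - x_a) + u_a`, keeping the artificial pair. Invariance of `Ω` makes this candidate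
feasible from `x⁺`, its first `N - 1` stage costs are those of the optimal tuple, and the
Lyapunov equation turns its last stage plus new terminal cost, at `e = x̄(N) - x_a`, into
`eᵀ P e`; so its dynamic cost is the optimal one minus the first stage cost. The offset cost is
unchanged and the avoidance cost moves by at most `S`.
-/

open Matrix

/-- The quadratic form `v ↦ vᵀ M v`. -/
noncomputable def quad {n : ℕ} (M : Matrix (Fin n) (Fin n) ℝ) (v : Fin n → ℝ) : ℝ :=
  v ⬝ᵥ M.mulVec v

/-- State trajectory of `x(j+1) = A x(j) + B v(j)` from `z` under controls `v`. -/
noncomputable def traj {n m : ℕ} (A : Matrix (Fin n) (Fin n) ℝ)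
    (B : Matrix (Fin n) (Fin m) ℝ) (z : Fin n → ℝ) (v : ℕ → Fin m → ℝ) : ℕ → Fin n → ℝ
  | 0 => z
  | j + 1 => A.mulVec (traj A B z v j) + B.mulVec (v j)

/-- Finite-horizon tracking cost `J(z; v)` with artificial pair `(xa, ua)`. -/
noncomputable def Jcost {n m : ℕ} (A : Matrix (Fin n) (Fin n) ℝ)
    (B : Matrix (Fin n) (Fin m) ℝ) (Q P : Matrix (Fin n) (Fin n) ℝ)
    (R : Matrix (Fin m) (Fin m) ℝ) (N : ℕ)
    (z : Fin n → ℝ) (v : ℕ → Fin m → ℝ) (xa : Fin n → ℝ) (ua : Fin m → ℝ) : ℝ :=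
  (∑ j ∈ Finset.range N, (quad Q (traj A B z v j - xa) + quad R (v j - ua)))
    + quad P (traj A B z v N - xa)

/-- Feasibility of a decision tuple `(v, xa, ua)` for the state `z`. -/
def FeasibleTuple {n m : ℕ} (A : Matrix (Fin n) (Fin n) ℝ)
    (B : Matrix (Fin n) (Fin m) ℝ) (Z : Set ((Fin n → ℝ) × (Fin m → ℝ)))
    (Ω : Set ((Fin n → ℝ) × (Fin n → ℝ) × (Fin m → ℝ))) (N : ℕ)
    (z : Fin n → ℝ) (v : ℕ → Fin m → ℝ) (xa : Fin n → ℝ) (ua : Fin m → ℝ) : Prop :=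
  (∀ j < N, (traj A B z v j, v j) ∈ Z) ∧ (traj A B z v N, xa, ua) ∈ Ω

/-- Total cost: dynamic cost plus offset cost plus avoidance cost. -/
noncomputable def VNtot {n m : ℕ} (A : Matrix (Fin n) (Fin n) ℝ)
    (B : Matrix (Fin n) (Fin m) ℝ) (Q P : Matrix (Fin n) (Fin n) ℝ)
    (R : Matrix (Fin m) (Fin m) ℝ) (N : ℕ)
    (Vof : (Fin n → ℝ) × (Fin m → ℝ) → ℝ)
    (Vav : (Fin n → ℝ) → (ℕ → Fin m → ℝ) → (Fin n → ℝ) → (Fin m → ℝ) → ℝ)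
    (z : Fin n → ℝ) (v : ℕ → Fin m → ℝ) (xa : Fin n → ℝ) (ua : Fin m → ℝ) : ℝ :=
  Jcost A B Q P R N z v xa ua + Vof (xa, ua) + Vav z v xa ua

/-- Value function: infimum of the total cost over feasible decision tuples. -/
noncomputable def Vstar {n m : ℕ} (A : Matrix (Fin n) (Fin n) ℝ)
    (B : Matrix (Fin n) (Fin m) ℝ) (Q P : Matrix (Fin n) (Fin n) ℝ)
    (R : Matrix (Fin m) (Fin m) ℝ) (Z : Set ((Fin n → ℝ) × (Fin m → ℝ)))
    (Ω : Set ((Fin n → ℝ) × (Fin n → ℝ) × (Fin m → ℝ))) (N : ℕ)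
    (Vof : (Fin n → ℝ) × (Fin m → ℝ) → ℝ)
    (Vav : (Fin n → ℝ) → (ℕ → Fin m → ℝ) → (Fin n → ℝ) → (Fin m → ℝ) → ℝ)
    (z : Fin n → ℝ) : ℝ :=
  sInf {c : ℝ | ∃ (v : ℕ → Fin m → ℝ) (xa : Fin n → ℝ) (ua : Fin m → ℝ),
    FeasibleTuple A B Z Ω N z v xa ua ∧ VNtot A B Q P R N Vof Vav z v xa ua = c}

open Finset

lemma quad_nonneg {n : ℕ} {M : Matrix (Fin n) (Fin n) ℝ} (hM : M.PosSemidef) (v : Fin n → ℝ) :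
    0 ≤ quad M v := by
  simpa [quad] using hM.dotProduct_mulVec_nonneg v

lemma quad_add {n : ℕ} (M M' : Matrix (Fin n) (Fin n) ℝ) (v : Fin n → ℝ) :
    quad (M + M') v = quad M v + quad M' v := by
  simp only [quad, add_mulVec, dotProduct_add]

lemma quad_transpose_mul_mul {k n : ℕ} (P : Matrix (Fin k) (Fin k) ℝ)
    (M : Matrix (Fin k) (Fin n) ℝ) (v : Fin n → ℝ) : quad (Mᵀ * P * M) v = quad P (M *ᵥ v) := by
  simp only [quad, ← mulVec_mulVec, dotProduct_mulVec, vecMul_transpose]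

lemma quad_eq_of_lyapunov {n m : ℕ} {A : Matrix (Fin n) (Fin n) ℝ} {B : Matrix (Fin n) (Fin m) ℝ}
    {K : Matrix (Fin m) (Fin n) ℝ} {Q P : Matrix (Fin n) (Fin n) ℝ} {R : Matrix (Fin m) (Fin m) ℝ}
    (hLyap : P = (A + B * K)ᵀ * P * (A + B * K) + Q + Kᵀ * R * K) (v : Fin n → ℝ) :
    quad P v = quad P ((A + B * K) *ᵥ v) + quad Q v + quad R (K *ᵥ v) := by
  conv_lhs => rw [hLyap]
  rw [quad_add, quad_add, quad_transpose_mul_mul, quad_transpose_mul_mul]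

lemma mulVec_feedback_sub_of_steady {ι κ 𝕜 : Type*} [Fintype ι] [Fintype κ] [CommRing 𝕜]
    {A : Matrix ι ι 𝕜} {B : Matrix ι κ 𝕜} (K : Matrix κ ι 𝕜) {xa : ι → 𝕜} {ua : κ → 𝕜}
    (hsteady : A *ᵥ xa + B *ᵥ ua = xa) (x : ι → 𝕜) :
    A *ᵥ x + B *ᵥ (K *ᵥ (x - xa) + ua) - xa = (A + B * K) *ᵥ (x - xa) := by
  rw [add_mulVec, ← mulVec_mulVec, mulVec_add, mulVec_sub A, eq_sub_of_add_eq hsteady]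
  abel

section Trajectory

variable {n m : ℕ} (A : Matrix (Fin n) (Fin n) ℝ) (B : Matrix (Fin n) (Fin m) ℝ)

lemma traj_congr {z : Fin n → ℝ} {v w : ℕ → Fin m → ℝ} {j : ℕ} (h : ∀ i < j, v i = w i) :
    traj A B z v j = traj A B z w j := by
  induction j with
  | zero => rfl
  | succ j ih => simp only [traj, ih fun i hi => h i (by omega), h j j.lt_succ_self]

lemma traj_tail (z : Fin n → ℝ) (v : ℕ → Fin m → ℝ) (j : ℕ) :
    traj A B (A *ᵥ z + B *ᵥ v 0) (fun i => v (i + 1)) j = traj A B z v (j + 1) := by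
  induction j with
  | zero => rfl
  | succ j ih => simp only [traj] at ih ⊢; rw [ih]

/-- The candidate control sequence `(u 1, …, u (N - 1), w)` for horizon `N`. -/
def shiftedControl (u : ℕ → Fin m → ℝ) (N : ℕ) (w : Fin m → ℝ) : ℕ → Fin m → ℝ :=
  fun j => if j + 1 < N then u (j + 1) else w

lemma traj_shiftedControl {z : Fin n → ℝ} {u : ℕ → Fin m → ℝ} {N j : ℕ} (w : Fin m → ℝ)
    (hj : j ≤ N) :
    traj A B (A *ᵥ z + B *ᵥ u 0) (shiftedControl u (N + 1) w) j = traj A B z u (j + 1) := by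
  rw [traj_congr A B (w := fun i => u (i + 1)), traj_tail]
  intro i hi
  simp [shiftedControl, show i + 1 < N + 1 by omega]

lemma traj_shiftedControl_horizon (z : Fin n → ℝ) (u : ℕ → Fin m → ℝ) (N : ℕ)
    (w : Fin m → ℝ) :
    traj A B (A *ᵥ z + B *ᵥ u 0) (shiftedControl u (N + 1) w) (N + 1)
      = A *ᵥ traj A B z u (N + 1) + B *ᵥ w := by
  rw [traj, traj_shiftedControl A B w le_rfl]
  simp [shiftedControl]

end Trajectory

section Candidate

variable {n m : ℕ} {A : Matrix (Fin n) (Fin n) ℝ} {B : Matrix (Fin n) (Fin m) ℝ}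

lemma Jcost_shiftedControl {K : Matrix (Fin m) (Fin n) ℝ} {Q P : Matrix (Fin n) (Fin n) ℝ}
    {R : Matrix (Fin m) (Fin m) ℝ} (hLyap : P = (A + B * K)ᵀ * P * (A + B * K) + Q + Kᵀ * R * K)
    {xa : Fin n → ℝ} {ua : Fin m → ℝ} (hsteady : A *ᵥ xa + B *ᵥ ua = xa) (N : ℕ)
    (z : Fin n → ℝ) (u : ℕ → Fin m → ℝ) :
    Jcost A B Q P R (N + 1) (A *ᵥ z + B *ᵥ u 0)
        (shiftedControl u (N + 1) (K *ᵥ (traj A B z u (N + 1) - xa) + ua)) xa ua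
      = Jcost A B Q P R (N + 1) z u xa ua - quad Q (z - xa) - quad R (u 0 - ua) := by
  set e := traj A B z u (N + 1) - xa
  have hterminal : traj A B (A *ᵥ z + B *ᵥ u 0)
      (shiftedControl u (N + 1) (K *ᵥ e + ua)) (N + 1) - xa = (A + B * K) *ᵥ e := by
    rw [traj_shiftedControl_horizon, mulVec_feedback_sub_of_steady K hsteady]
  have hshifted : ∀ j ∈ range N,
      quad Q (traj A B (A *ᵥ z + B *ᵥ u 0) (shiftedControl u (N + 1) (K *ᵥ e + ua)) j - xa)
        + quad R (shiftedControl u (N + 1) (K *ᵥ e + ua) j - ua)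
      = quad Q (traj A B z u (j + 1) - xa) + quad R (u (j + 1) - ua) := by
    intro j hj
    have hj : j < N := mem_range.mp hj
    rw [traj_shiftedControl A B _ hj.le]
    simp [shiftedControl, hj]
  have hlast : quad Q (traj A B (A *ᵥ z + B *ᵥ u 0)
        (shiftedControl u (N + 1) (K *ᵥ e + ua)) N - xa)
      + quad R (shiftedControl u (N + 1) (K *ᵥ e + ua) N - ua)
      = quad Q e + quad R (K *ᵥ e) := by
    rw [traj_shiftedControl A B _ le_rfl]
    simp [shiftedControl, e]
  unfold Jcost
  rw [sum_range_succ, sum_congr rfl hshifted, hlast, hterminal, sum_range_succ',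
    quad_eq_of_lyapunov hLyap e]
  simp only [traj]
  ring

lemma feasibleTuple_shiftedControl {K : Matrix (Fin m) (Fin n) ℝ}
    {Z : Set ((Fin n → ℝ) × (Fin m → ℝ))} {Ω : Set ((Fin n → ℝ) × (Fin n → ℝ) × (Fin m → ℝ))}
    (hΩ : ∀ p ∈ Ω,
      (p.1, K.mulVec (p.1 - p.2.1) + p.2.2) ∈ Z ∧
      A.mulVec p.2.1 + B.mulVec p.2.2 = p.2.1 ∧
      (A.mulVec p.1 + B.mulVec (K.mulVec (p.1 - p.2.1) + p.2.2), p.2.1, p.2.2) ∈ Ω)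
    {N : ℕ} {z : Fin n → ℝ} {u : ℕ → Fin m → ℝ} {xa : Fin n → ℝ} {ua : Fin m → ℝ}
    (hfeas : FeasibleTuple A B Z Ω (N + 1) z u xa ua) :
    FeasibleTuple A B Z Ω (N + 1) (A *ᵥ z + B *ᵥ u 0)
      (shiftedControl u (N + 1) (K *ᵥ (traj A B z u (N + 1) - xa) + ua)) xa ua := by
  obtain ⟨hZ, hΩN⟩ := hfeas
  obtain ⟨hZ_terminal, -, hΩ_terminal⟩ := hΩ _ hΩN
  refine ⟨fun j hj => ?_, ?_⟩
  · rw [traj_shiftedControl A B _ (Nat.lt_succ_iff.mp hj)]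
    rcases (Nat.lt_succ_iff.mp hj).lt_or_eq with hjN | rfl
    · simpa [shiftedControl, hjN] using hZ (j + 1) (by omega)
    · simpa [shiftedControl] using hZ_terminal
  · rw [traj_shiftedControl_horizon]
    exact hΩ_terminal

end Candidate

lemma Jcost_nonneg {n m : ℕ} (A : Matrix (Fin n) (Fin n) ℝ) (B : Matrix (Fin n) (Fin m) ℝ)
    {Q P : Matrix (Fin n) (Fin n) ℝ} {R : Matrix (Fin m) (Fin m) ℝ} (hQ : Q.PosSemidef)
    (hR : R.PosSemidef) (hP : P.PosSemidef) (N : ℕ) (z : Fin n → ℝ) (v : ℕ → Fin m → ℝ)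
    (xa : Fin n → ℝ) (ua : Fin m → ℝ) : 0 ≤ Jcost A B Q P R N z v xa ua :=
  add_nonneg (sum_nonneg fun _ _ => add_nonneg (quad_nonneg hQ _) (quad_nonneg hR _))
    (quad_nonneg hP _)

lemma Vstar_le_VNtot {n m N : ℕ} {A : Matrix (Fin n) (Fin n) ℝ} {B : Matrix (Fin n) (Fin m) ℝ}
    {Q P : Matrix (Fin n) (Fin n) ℝ} {R : Matrix (Fin m) (Fin m) ℝ}
    {Z : Set ((Fin n → ℝ) × (Fin m → ℝ))} {Ω : Set ((Fin n → ℝ) × (Fin n → ℝ) × (Fin m → ℝ))}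
    {Vof : (Fin n → ℝ) × (Fin m → ℝ) → ℝ}
    {Vav : (Fin n → ℝ) → (ℕ → Fin m → ℝ) → (Fin n → ℝ) → (Fin m → ℝ) → ℝ}
    (hQ : Q.PosSemidef) (hR : R.PosSemidef) (hP : P.PosSemidef) (hVof : ∀ q, 0 ≤ Vof q)
    (hVav : ∀ z v xa ua, 0 ≤ Vav z v xa ua) {z : Fin n → ℝ} {v : ℕ → Fin m → ℝ}
    {xa : Fin n → ℝ} {ua : Fin m → ℝ} (hfeas : FeasibleTuple A B Z Ω N z v xa ua) :
    Vstar A B Q P R Z Ω N Vof Vav z ≤ VNtot A B Q P R N Vof Vav z v xa ua := by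
  refine csInf_le ⟨0, ?_⟩ ⟨v, xa, ua, hfeas, rfl⟩
  rintro _ ⟨v', xa', ua', -, rfl⟩
  exact add_nonneg (add_nonneg (Jcost_nonneg A B hQ hR hP N z v' xa' ua') (hVof _)) (hVav ..)

theorem value_function_decrease_general
    (n m N : ℕ) (hN : 1 ≤ N)
    (A : Matrix (Fin n) (Fin n) ℝ) (B : Matrix (Fin n) (Fin m) ℝ)
    (K : Matrix (Fin m) (Fin n) ℝ)
    (Q P : Matrix (Fin n) (Fin n) ℝ) (R : Matrix (Fin m) (Fin m) ℝ)
    (hQ : Q.PosSemidef) (hR : R.PosSemidef) (hP : P.PosSemidef)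
    (hLyap : P = (A + B * K)ᵀ * P * (A + B * K) + Q + Kᵀ * R * K)
    (Z : Set ((Fin n → ℝ) × (Fin m → ℝ)))
    (Ω : Set ((Fin n → ℝ) × (Fin n → ℝ) × (Fin m → ℝ)))
    (hΩ : ∀ p ∈ Ω,
      (p.1, K.mulVec (p.1 - p.2.1) + p.2.2) ∈ Z ∧
      A.mulVec p.2.1 + B.mulVec p.2.2 = p.2.1 ∧
      (A.mulVec p.1 + B.mulVec (K.mulVec (p.1 - p.2.1) + p.2.2), p.2.1, p.2.2) ∈ Ω)
    (S : ℝ)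
    (Vof : (Fin n → ℝ) × (Fin m → ℝ) → ℝ) (hVof : ∀ q, 0 ≤ Vof q)
    (Vav : (Fin n → ℝ) → (ℕ → Fin m → ℝ) → (Fin n → ℝ) → (Fin m → ℝ) → ℝ)
    (hVav : ∀ z v xa ua, 0 ≤ Vav z v xa ua ∧ Vav z v xa ua ≤ S)
    (x : Fin n → ℝ) (uo : ℕ → Fin m → ℝ) (xao : Fin n → ℝ) (uao : Fin m → ℝ)
    (hfeas : FeasibleTuple A B Z Ω N x uo xao uao)
    (hopt : Vstar A B Q P R Z Ω N Vof Vav x = VNtot A B Q P R N Vof Vav x uo xao uao) :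
    Vstar A B Q P R Z Ω N Vof Vav (A.mulVec x + B.mulVec (uo 0))
      ≤ Vstar A B Q P R Z Ω N Vof Vav x
        - quad Q (x - xao) - quad R (uo 0 - uao) + S := by
  obtain ⟨N, rfl⟩ := Nat.exists_eq_add_of_le' hN
  set u' := shiftedControl uo (N + 1) (K *ᵥ (traj A B x uo (N + 1) - xao) + uao)
  have hJ : Jcost A B Q P R (N + 1) (A *ᵥ x + B *ᵥ uo 0) u' xao uao
      = Jcost A B Q P R (N + 1) x uo xao uao - quad Q (x - xao) - quad R (uo 0 - uao) :=
    Jcost_shiftedControl hLyap (hΩ _ hfeas.2).2.1 N x uo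
  calc Vstar A B Q P R Z Ω (N + 1) Vof Vav (A *ᵥ x + B *ᵥ uo 0)
      ≤ VNtot A B Q P R (N + 1) Vof Vav (A *ᵥ x + B *ᵥ uo 0) u' xao uao :=
        Vstar_le_VNtot hQ hR hP hVof (fun z v xa ua => (hVav z v xa ua).1)
          (feasibleTuple_shiftedControl hΩ hfeas)
    _ ≤ VNtot A B Q P R (N + 1) Vof Vav x uo xao uao
          - quad Q (x - xao) - quad R (uo 0 - uao) + S := by
        unfold VNtot
        linarith [(hVav (A *ᵥ x + B *ᵥ uo 0) u' xao uao).2, (hVav x uo xao uao).1]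
    _ = _ := by rw [hopt]

/-- Lemma 6 (decreasing property): the optimal value function of the set-point
tracking MPC with an avoidance cost bounded between `0` and `S` decreases by at
least the first optimal stage cost, up to the disturbance `S`. -/
theorem value_function_decrease
    (n m N : ℕ) (hN : 1 ≤ N)
    (A : Matrix (Fin n) (Fin n) ℝ) (B : Matrix (Fin n) (Fin m) ℝ)
    (K : Matrix (Fin m) (Fin n) ℝ)
    (Q P : Matrix (Fin n) (Fin n) ℝ) (R : Matrix (Fin m) (Fin m) ℝ)
    (hQ : Q.PosSemidef) (hR : R.PosSemidef) (hP : P.PosSemidef)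
    (hLyap : P = (A + B * K)ᵀ * P * (A + B * K) + Q + Kᵀ * R * K)
    (Z : Set ((Fin n → ℝ) × (Fin m → ℝ)))
    (Ω : Set ((Fin n → ℝ) × (Fin n → ℝ) × (Fin m → ℝ)))
    (hΩ : ∀ p ∈ Ω,
      (p.1, K.mulVec (p.1 - p.2.1) + p.2.2) ∈ Z ∧
      A.mulVec p.2.1 + B.mulVec p.2.2 = p.2.1 ∧
      (A.mulVec p.1 + B.mulVec (K.mulVec (p.1 - p.2.1) + p.2.2), p.2.1, p.2.2) ∈ Ω)
    (S : ℝ) (hS : 0 ≤ S)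
    (Vof : (Fin n → ℝ) × (Fin m → ℝ) → ℝ) (hVof : ∀ q, 0 ≤ Vof q)
    (Vav : (Fin n → ℝ) → (ℕ → Fin m → ℝ) → (Fin n → ℝ) → (Fin m → ℝ) → ℝ)
    (hVav : ∀ z v xa ua, 0 ≤ Vav z v xa ua ∧ Vav z v xa ua ≤ S)
    (x : Fin n → ℝ) (uo : ℕ → Fin m → ℝ) (xao : Fin n → ℝ) (uao : Fin m → ℝ)
    (hfeas : FeasibleTuple A B Z Ω N x uo xao uao)
    (hopt : Vstar A B Q P R Z Ω N Vof Vav x = VNtot A B Q P R N Vof Vav x uo xao uao) :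
    Vstar A B Q P R Z Ω N Vof Vav (A.mulVec x + B.mulVec (uo 0))
      ≤ Vstar A B Q P R Z Ω N Vof Vav x
        - quad Q (x - xao) - quad R (uo 0 - uao) + S :=
  value_function_decrease_general n m N hN A B K Q P R hQ hR hP hLyap Z Ω hΩ S Vof hVof Vav hVav x
    uo xao uao hfeas hopt
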